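/- arXiv:2507.23713 — 3 statements merged into one kernel-verified Lean document; each statement's English description precedes it below -/
import Mathlib

section
/- (Example 1, FGM copula RD property) Let X₁, X₂, Y₁, Y₂ be nonnegative random variables, each with the same absolutely continuous distribution G, such that any two and any three of them are independent, and their joint survival function is P[X₁>x₁, X₂>x₂, Y₁>y₁, Y₂>y₂] = Ḡ(x₁)Ḡ(x₂)Ḡ(y₁)Ḡ(y₂)(1 + θ G(x₁)G(x₂)G(y₁)G(y₂)) with θ ∈ [−1,1]. Define X_A = max{X₁, X₂} and Y_A = max{Y₁, Y₂}. Then for all x sufficiently large and all y, P[X_A > x | Y_A = y] ≤ 4 P[X_A > x]. -/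
open Filter Topology

/-- (FGM copula RD property.) With `X_A = max(X₁,X₂)`, `Y_A = max(Y₁,Y₂)` from
the four-dimensional FGM structure with common absolutely continuous marginal
`G` and parameter `θ ∈ [−1,1]`, the conditional probability
`P[X_A > x | Y_A = y]` (expressed through the survival copula as the displayed
formula) is at most `4 P[X_A > x] = 4(2Ḡ(x) − Ḡ(x)²)` for all sufficiently
large `x` and all `y`. -/
theorem FGM_RD_bound (G : ℝ → ℝ) (hmono : Monotone G)
    (h01 : ∀ x : ℝ, 0 ≤ G x ∧ G x ≤ 1) (hlim : Tendsto G atTop (nhds 1))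
    (θ : ℝ) (hθ : θ ∈ Set.Icc (-1 : ℝ) 1) :
    ∀ᶠ x : ℝ in atTop, ∀ y : ℝ, 0 < G y →
      (2 * G y)⁻¹ *
          (4 * (1 - G x) * G y - 2 * (1 - G x) ^ 2
            + 2 * (1 - G x) ^ 2 * (1 - G y) * (1 + θ * G x ^ 2 * G y ^ 2)
            - 2 * θ * (1 - G x) ^ 2 * (1 - G y) ^ 2 * G x ^ 2 * G y)
        ≤ 4 * (2 * (1 - G x) - (1 - G x) ^ 2) := by
  refine Filter.Eventually.of_forall fun x => fun y hy => ?_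
  obtain ⟨ha0, ha1⟩ := h01 x
  obtain ⟨hb0, hb1⟩ := h01 y
  obtain ⟨ht0, ht1⟩ := hθ
  rw [inv_mul_le_iff₀ (by linarith)]
  set a := G x
  set b := G y
  have hd1 : (1 - b) * (2 * b - 1) ≤ 1 := by nlinarith [sq_nonneg (2*b - 1)]
  have hd2 : -1 ≤ (1 - b) * (2 * b - 1) := by nlinarith
  have hta1 : θ * a ^ 2 ≤ 1 := by nlinarith [sq_nonneg a]
  have hta2 : -1 ≤ θ * a ^ 2 := by nlinarith [sq_nonneg a]
  have hc1 : θ * a ^ 2 * ((1 - b) * (2 * b - 1)) ≤ 1 := by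
    nlinarith [mul_nonneg (sub_nonneg.2 hta1) (sub_nonneg.2 hd1),
      mul_nonneg (by linarith : (0:ℝ) ≤ 1 + θ * a ^ 2) (by linarith : (0:ℝ) ≤ 1 + (1 - b) * (2 * b - 1))]
  have h1 : 0 ≤ 2 * b * (1 - a) ^ 2 * (1 - θ * a ^ 2 * ((1 - b) * (2 * b - 1))) :=
    mul_nonneg (mul_nonneg (by linarith) (sq_nonneg _)) (by linarith)
  have h2 : 0 ≤ b * ((1 - a) * a) := mul_nonneg hb0 (mul_nonneg (by linarith) ha0)
  have h3 : 0 ≤ b * (1 - a) := mul_nonneg hb0 (by linarith)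
  nlinarith [h1, h2, h3]
end

section
/- (Example 2, QAI but not RD) Let (X₁,X₂) and (Y₁,Y₂) be positive random vectors with X₁ ⊥ X₂, Y₁ ⊥ Y₂, X_i ⊥ Y_j for i ≠ j, and joint tails P[X_i > x, Y_i > y] = (1 + x³ + y)^{−1} for x, y ≥ 0, i = 1,2. With X_A = max(X₁,X₂) and Y_A = max(Y₁,Y₂): (a) P[X_A > x, Y_A > x]/(P[X_A > x] + P[Y_A > x]) → 0 as x → ∞; (b) liminf_{x→∞} P[X_A > x, Y_A > x]/P[X_A > x] ≥ 3/4 > 0. -/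
/-!
Write `p = (1 + x³)⁻¹`, `q = (1 + x)⁻¹` and `r = (1 + x³ + x)⁻¹` for the tails of `X_i`, `Y_i`
and `min(X_i, Y_i)`. The union bound gives `P[X_A > x] ≤ 2p`, while `P[Y_A > x] ≥ q`, so the
ratio in (a) is at most `2p / q = O(x⁻²)`. On the other hand `{X_A > x, Y_A > x}` contains the
event that `min(X_i, Y_i) > x` for some `i`, whose probability is `2r - r²` by independence of
the two pairs; since `r ~ p`, this is eventually at least `3/4 · 2p ≥ 3/4 · P[X_A > x]`.
-/

open Filter Topology MeasureTheory ProbabilityTheory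

section Tails

variable {Ω : Type*} [MeasurableSpace Ω] {μ : Measure Ω}

lemma ProbabilityTheory.IndepFun.measureReal_preimage_union [IsFiniteMeasure μ]
    {β γ : Type*} [MeasurableSpace β] [MeasurableSpace γ] {f : Ω → β} {g : Ω → γ}
    (hfg : IndepFun f g μ) (hg : Measurable g) {s : Set β} {t : Set γ} (hs : MeasurableSet s)
    (ht : MeasurableSet t) :
    μ.real (f ⁻¹' s ∪ g ⁻¹' t) =
      μ.real (f ⁻¹' s) + μ.real (g ⁻¹' t) - μ.real (f ⁻¹' s) * μ.real (g ⁻¹' t) := by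
  have hmul : μ.real (f ⁻¹' s ∩ g ⁻¹' t) = μ.real (f ⁻¹' s) * μ.real (g ⁻¹' t) := by
    simp only [Measure.real, hfg.measure_inter_preimage_eq_mul s t hs ht, ENNReal.toReal_mul]
  linarith [measureReal_union_add_inter (μ := μ) (s := f ⁻¹' s) (hg ht)]

lemma measureReal_lt_max_le (f g : Ω → ℝ) (x : ℝ) :
    μ.real {ω | x < max (f ω) (g ω)} ≤ μ.real {ω | x < f ω} + μ.real {ω | x < g ω} := by
  simpa only [lt_max_iff, Set.ofPred_or] using measureReal_union_le _ _

lemma measureReal_lt_le_lt_max [IsFiniteMeasure μ] (f g : Ω → ℝ) (x : ℝ) :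
    μ.real {ω | x < f ω} ≤ μ.real {ω | x < max (f ω) (g ω)} :=
  measureReal_mono fun _ (h : x < _) => lt_max_of_lt_left h

lemma measureReal_lt_max_and_lt_max_ge [IsFiniteMeasure μ] {f₀ g₀ f₁ g₁ : Ω → ℝ}
    (hf₁ : Measurable f₁) (hg₁ : Measurable g₁)
    (hind : IndepFun (fun ω => (f₀ ω, g₀ ω)) (fun ω => (f₁ ω, g₁ ω)) μ) (x : ℝ) :
    μ.real {ω | x < f₀ ω ∧ x < g₀ ω} + μ.real {ω | x < f₁ ω ∧ x < g₁ ω} -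
        μ.real {ω | x < f₀ ω ∧ x < g₀ ω} * μ.real {ω | x < f₁ ω ∧ x < g₁ ω} ≤
      μ.real {ω | x < max (f₀ ω) (f₁ ω) ∧ x < max (g₀ ω) (g₁ ω)} := by
  have hquad : MeasurableSet (Set.Ioi x ×ˢ Set.Ioi x) := measurableSet_Ioi.prod measurableSet_Ioi
  refine (hind.measureReal_preimage_union (hf₁.prodMk hg₁) hquad hquad).symm.trans_le
    (measureReal_mono ?_)
  rintro ω (⟨hf, hg⟩ | ⟨hf, hg⟩)
  · exact ⟨lt_max_of_lt_left hf, lt_max_of_lt_left hg⟩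
  · exact ⟨lt_max_of_lt_right hf, lt_max_of_lt_right hg⟩

end Tails

lemma tendsto_two_mul_inv_one_add_cube_div_inv_one_add :
    Tendsto (fun x : ℝ => 2 * (1 + x ^ 3)⁻¹ / (1 + x)⁻¹) atTop (𝓝 0) := by
  have hlim : Tendsto (fun x : ℝ => 4 / x ^ 2) atTop (𝓝 0) :=
    tendsto_const_nhds.div_atTop (tendsto_pow_atTop two_ne_zero)
  refine tendsto_of_tendsto_of_tendsto_of_le_of_le' tendsto_const_nhds hlim ?_ ?_
  · filter_upwards [eventually_ge_atTop 0] with x hx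
    positivity
  · filter_upwards [eventually_ge_atTop 1] with x hx
    rw [div_le_div_iff₀ (by positivity) (by positivity)]
    field_simp
    nlinarith [pow_le_pow_right₀ hx (show 2 ≤ 3 by norm_num)]

lemma three_fourths_mul_two_mul_inv_le {x : ℝ} (hx : 2 ≤ x) :
    3 / 4 * (2 * (1 + x ^ 3)⁻¹) ≤ 2 * (1 + x ^ 3 + x)⁻¹ - ((1 + x ^ 3 + x)⁻¹) ^ 2 := by
  have hb : 0 < 1 + x ^ 3 + x := by positivity
  rw [show 2 * (1 + x ^ 3 + x)⁻¹ - ((1 + x ^ 3 + x)⁻¹) ^ 2 =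
      (2 * (1 + x ^ 3 + x) - 1) / (1 + x ^ 3 + x) ^ 2 by field_simp,
    show 3 / 4 * (2 * (1 + x ^ 3)⁻¹) = 3 / (2 * (1 + x ^ 3)) by field_simp; ring,
    div_le_div_iff₀ (by positivity) (by positivity)]
  -- with `a = 1 + x³`, the difference is `(a - 3x)(a + x) - 2a`, and `a - 3x - 3 = (x - 2)(x + 1)²`
  nlinarith [mul_nonneg (mul_nonneg (sub_nonneg.2 hx) (sq_nonneg (x + 1))) hb.le]

/-- (QAI but not RD example.) Let `(X₁,X₂)`, `(Y₁,Y₂)` be positive random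
vectors such that the pairs `(X₁,Y₁)` and `(X₂,Y₂)` are independent with joint
tails `P[X_i > x, Y_i > y] = (1+x³+y)⁻¹` for `x,y ≥ 0`. With
`X_A = max(X₁,X₂)` and `Y_A = max(Y₁,Y₂)`:
(a) `P[X_A > x, Y_A > x]/(P[X_A > x]+P[Y_A > x]) → 0` (QAI_A), and
(b) `liminf P[X_A > x, Y_A > x]/P[X_A > x] ≥ 3/4 > 0` (so not RD_A). -/
theorem QAI_not_RD_example {Ω : Type*} [MeasurableSpace Ω] (μ : Measure Ω)
    [IsProbabilityMeasure μ] (X Y : Fin 2 → Ω → ℝ)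
    (hmX : ∀ i, Measurable (X i)) (hmY : ∀ i, Measurable (Y i))
    (hposXY : ∀ i ω, 0 < X i ω ∧ 0 < Y i ω)
    (hpair : ProbabilityTheory.IndepFun (fun ω => (X 0 ω, Y 0 ω)) (fun ω => (X 1 ω, Y 1 ω)) μ)
    (hjoint : ∀ i : Fin 2, ∀ x y : ℝ, 0 ≤ x → 0 ≤ y →
      (μ {ω | x < X i ω ∧ y < Y i ω}).toReal = (1 + x ^ 3 + y)⁻¹) :
    Tendsto (fun x : ℝ =>
        (μ {ω | x < max (X 0 ω) (X 1 ω) ∧ x < max (Y 0 ω) (Y 1 ω)}).toReal /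
          ((μ {ω | x < max (X 0 ω) (X 1 ω)}).toReal +
            (μ {ω | x < max (Y 0 ω) (Y 1 ω)}).toReal)) atTop (nhds 0) ∧
      (3 / 4 : ℝ) ≤ Filter.liminf (fun x : ℝ =>
        (μ {ω | x < max (X 0 ω) (X 1 ω) ∧ x < max (Y 0 ω) (Y 1 ω)}).toReal /
          (μ {ω | x < max (X 0 ω) (X 1 ω)}).toReal) atTop := by
  simp only [← measureReal_def] at hjoint ⊢
  have tailX : ∀ i x, 0 ≤ x → μ.real {ω | x < X i ω} = (1 + x ^ 3)⁻¹ := fun i x hx => by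
    simpa [(hposXY i _).2] using hjoint i x 0 hx le_rfl
  have tailY : ∀ i y, 0 ≤ y → μ.real {ω | y < Y i ω} = (1 + y)⁻¹ := fun i y hy => by
    simpa [(hposXY i _).1] using hjoint i 0 y le_rfl hy
  have maxX_le : ∀ x, 0 ≤ x → μ.real {ω | x < max (X 0 ω) (X 1 ω)} ≤ 2 * (1 + x ^ 3)⁻¹ :=
    fun x hx => by
      linarith [measureReal_lt_max_le (μ := μ) (X 0) (X 1) x, tailX 0 x hx, tailX 1 x hx]
  have maxX_ge : ∀ x, 0 ≤ x → (1 + x ^ 3)⁻¹ ≤ μ.real {ω | x < max (X 0 ω) (X 1 ω)} :=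
    fun x hx => tailX 0 x hx ▸ measureReal_lt_le_lt_max (X 0) (X 1) x
  have maxY_ge : ∀ x, 0 ≤ x → (1 + x)⁻¹ ≤ μ.real {ω | x < max (Y 0 ω) (Y 1 ω)} :=
    fun x hx => tailY 0 x hx ▸ measureReal_lt_le_lt_max (Y 0) (Y 1) x
  have joint_le : ∀ x, μ.real {ω | x < max (X 0 ω) (X 1 ω) ∧ x < max (Y 0 ω) (Y 1 ω)} ≤
      μ.real {ω | x < max (X 0 ω) (X 1 ω)} := fun x => measureReal_mono fun _ h => h.1
  have joint_ge : ∀ x, 0 ≤ x → 2 * (1 + x ^ 3 + x)⁻¹ - ((1 + x ^ 3 + x)⁻¹) ^ 2 ≤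
      μ.real {ω | x < max (X 0 ω) (X 1 ω) ∧ x < max (Y 0 ω) (Y 1 ω)} := fun x hx => by
    have h := measureReal_lt_max_and_lt_max_ge (hmX 1) (hmY 1) hpair x
    rw [hjoint 0 x x hx hx, hjoint 1 x x hx hx] at h
    linarith
  refine ⟨tendsto_of_tendsto_of_tendsto_of_le_of_le' tendsto_const_nhds
    tendsto_two_mul_inv_one_add_cube_div_inv_one_add (.of_forall fun x => by positivity) ?_, ?_⟩
  · filter_upwards [eventually_ge_atTop 0] with x hx
    exact div_le_div₀ (by positivity) ((joint_le x).trans (maxX_le x hx)) (by positivity)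
      (le_add_of_nonneg_of_le measureReal_nonneg (maxY_ge x hx))
  · refine le_liminf_of_le (isCoboundedUnder_ge_of_le _ fun x =>
      div_le_one_of_le₀ (joint_le x) measureReal_nonneg) ?_
    filter_upwards [eventually_ge_atTop 2] with x hx
    have hx0 : 0 ≤ x := by linarith
    have hp : (0 : ℝ) < (1 + x ^ 3)⁻¹ := by positivity
    rw [le_div_iff₀ (hp.trans_le (maxX_ge x hx0))]
    calc 3 / 4 * μ.real {ω | x < max (X 0 ω) (X 1 ω)} ≤ 3 / 4 * (2 * (1 + x ^ 3)⁻¹) := by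
          gcongr; exact maxX_le x hx0
      _ ≤ _ := three_fourths_mul_two_mul_inv_le hx
      _ ≤ _ := joint_ge x hx0
end

section
/- (Sandwich property of scaled rare sets) Let A ⊆ ℝ^d be open, increasing, with convex complement and 0 ∉ Ā (i.e., A ∈ 𝓡). Then for any fixed c ∈ [0,∞)^d and all sufficiently large x, there exists u ∈ (0, x) such that (x+u)A ⊆ xA + c ⊆ (x−u)A, where xA + c = {xa + c : a ∈ A}. -/
open Filter Topology Pointwise

/-!
Some ball `ball 0 ε` misses `A`. If `a ∈ A`, `t > 1` and `b ∉ A` were within `(t - 1) ε` of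
`t • a`, then `a = t⁻¹ • b + (1 - t⁻¹) • z` with `z ∈ ball 0 ε`, so `a ∉ A` by convexity of `Aᶜ`.
Hence the ball of radius `(t - 1) ε` around `t • A` stays in `A`, and a translate `r • A + {c}` lies
in `s • A` as soon as `s < r` and `‖c‖ < (r - s) ε`; take `u` with `‖c‖ < u ε`.
-/

section ConvexCompl

variable {E : Type*} [NormedAddCommGroup E] [NormedSpace ℝ E] {A : Set E} {ε : ℝ}

open Metric

theorem ball_smul_subset_of_convex_compl (hconv : Convex ℝ Aᶜ) (hA : Disjoint (ball 0 ε) A)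
    {a : E} (ha : a ∈ A) {t : ℝ} (ht : 1 < t) : ball (t • a) ((t - 1) * ε) ⊆ A := by
  intro b hb
  by_contra hbA
  have ht₁ : 0 < t - 1 := by linarith
  set z : E := (t - 1)⁻¹ • (t • a - b)
  have hz : z ∈ Aᶜ := by
    refine Set.subset_compl_iff_disjoint_right.mpr hA (mem_ball_zero_iff.mpr ?_)
    rw [norm_smul, Real.norm_of_nonneg (inv_nonneg.mpr ht₁.le), ← dist_eq_norm, dist_comm,
      inv_mul_lt_iff₀ ht₁]
    exact hb
  have hcombo : t⁻¹ • b + (1 - t⁻¹) • z = a := by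
    have : t - 1 ≠ 0 := ht₁.ne'
    have : t ≠ 0 := by linarith
    simp only [z]
    match_scalars
    · field_simp
      ring
    · field_simp
  refine hconv hbA hz (by positivity) (sub_nonneg.mpr (inv_le_one_of_one_le₀ ht.le))
    (add_sub_cancel _ _) ?_
  rwa [hcombo]

theorem smul_add_singleton_subset_smul (hconv : Convex ℝ Aᶜ) (hA : Disjoint (ball 0 ε) A)
    {r s : ℝ} (hs : 0 < s) (hsr : s < r) {c : E} (hc : ‖c‖ < (r - s) * ε) :
    r • A + {c} ⊆ s • A := by
  rw [Set.add_singleton]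
  rintro _ ⟨_, ⟨a, ha, rfl⟩, rfl⟩
  refine ⟨(r / s) • a + s⁻¹ • c, ?_, ?_⟩
  · refine ball_smul_subset_of_convex_compl hconv hA ha ((one_lt_div hs).mpr hsr) ?_
    rw [mem_ball, dist_eq_norm, add_sub_cancel_left, norm_smul,
      Real.norm_of_nonneg (inv_nonneg.mpr hs.le), inv_mul_lt_iff₀ hs]
    calc ‖c‖ < (r - s) * ε := hc
      _ = s * ((r / s - 1) * ε) := by field_simp
  · simp only [smul_add, smul_smul, mul_div_cancel₀ _ hs.ne', mul_inv_cancel₀ hs.ne', one_smul]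

end ConvexCompl

theorem rare_set_sandwich_general (d : ℕ) (A : Set (Fin d → ℝ))
    (hconv : Convex ℝ Aᶜ) (h0 : (0 : Fin d → ℝ) ∉ closure A) :
    ∀ c : Fin d → ℝ, (∀ k, 0 ≤ c k) →
      ∀ᶠ x : ℝ in atTop, ∃ u ∈ Set.Ioo (0 : ℝ) x,
        (x + u) • A ⊆ (x • A) + ({c} : Set (Fin d → ℝ)) ∧
          (x • A) + ({c} : Set (Fin d → ℝ)) ⊆ (x - u) • A := by
  intro c _
  obtain ⟨ε, hε, hball⟩ := Metric.isOpen_iff.mp isClosed_closure.isOpen_compl 0 h0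
  have hA : Disjoint (Metric.ball 0 ε) A :=
    Set.subset_compl_iff_disjoint_right.mp (hball.trans (Set.compl_subset_compl.mpr subset_closure))
  set u := (‖c‖ + 1) / ε
  have hu : 0 < u := by positivity
  have hcu : ‖c‖ < u * ε := by simp [u, div_mul_cancel₀ _ hε.ne']
  filter_upwards [eventually_gt_atTop u] with x hux
  refine ⟨u, ⟨hu, hux⟩, ?_, ?_⟩
  · intro y hy
    have hshift : y + -c ∈ x • A :=
      smul_add_singleton_subset_smul hconv hA (hu.trans hux) (by linarith)
        (by rwa [norm_neg, add_sub_cancel_left]) (Set.add_mem_add hy rfl)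
    simpa using Set.add_mem_add hshift (Set.mem_singleton c)
  · exact smul_add_singleton_subset_smul hconv hA (sub_pos.mpr hux) (by linarith)
      (by rwa [sub_sub_cancel])

/-- (Sandwich property of scaled rare sets.) Let `A ⊆ ℝ^d` be open,
increasing, with convex complement and `0 ∉ closure A` (i.e. `A ∈ 𝓡`). Then
for any fixed `c ∈ [0,∞)^d` and all sufficiently large `x`, there is
`u ∈ (0,x)` with `(x+u)A ⊆ xA + c ⊆ (x−u)A`. -/
theorem rare_set_sandwich (d : ℕ) (A : Set (Fin d → ℝ)) (hopen : IsOpen A)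
    (hinc : ∀ a ∈ A, ∀ y : Fin d → ℝ, (∀ k, 0 ≤ y k) → a + y ∈ A)
    (hconv : Convex ℝ Aᶜ) (h0 : (0 : Fin d → ℝ) ∉ closure A) :
    ∀ c : Fin d → ℝ, (∀ k, 0 ≤ c k) →
      ∀ᶠ x : ℝ in atTop, ∃ u ∈ Set.Ioo (0 : ℝ) x,
        (x + u) • A ⊆ (x • A) + ({c} : Set (Fin d → ℝ)) ∧
          (x • A) + ({c} : Set (Fin d → ℝ)) ⊆ (x - u) • A :=
  rare_set_sandwich_general d A hconv h0
end
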